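/- arXiv:2604.18419 — 5 statements merged into one kernel-verified Lean document; each statement's English description precedes it below -/
import Mathlib

section
/- In a finite-horizon MDP over sequences of length at most T with terminal-only rewards, the dynamic value-thresholding policy a(π) — which abstains (receiving reward r⊥) at the first state where V(s;π) < r⊥ and otherwise follows π — satisfies V(s; a(π)) ≥ max(r⊥, V(s;π)) at every reachable non-terminal state s. -/
open Finset

attribute [local instance] Classical.propDecidable

variable {V : Type*}

/-- Expected terminal reward (value function) of policy `π` from state `s`
with `n` generation steps remaining; `e` is the end-of-sequence token and
`r` the terminal reward, collected only when `e` is emitted.  States already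
containing `e` are terminal and have value `0`. -/
noncomputable def Vval [Fintype V] (e : V) (r : List V → ℝ)
    (π : List V → V → ℝ) : ℕ → List V → ℝ
  | 0, _ => 0
  | n+1, s =>
      if e ∈ s then 0 else
      ∑ a : V, π s a * (if a = e then r (s ++ [a]) else Vval e r π n (s ++ [a]))

/-- Value of the dynamic value-thresholding policy `a(π)`: at any
non-terminal state whose value under `π` is below the abstention reward
`rb` it abstains and receives `rb`; otherwise it follows `π`. -/
noncomputable def Aval [Fintype V] (e : V) (r : List V → ℝ)
    (π : List V → V → ℝ) (rb : ℝ) : ℕ → List V → ℝ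
  | 0, _ => 0
  | n+1, s =>
      if e ∈ s then 0 else
      if Vval e r π (n+1) s < rb then rb else
      ∑ a : V, π s a * (if a = e then r (s ++ [a]) else Aval e r π rb n (s ++ [a]))

/-- One generation step with positive probability from a non-terminal state. -/
def Step (e : V) (π : List V → V → ℝ) (s s' : List V) : Prop :=
  e ∉ s ∧ ∃ a : V, 0 < π s a ∧ s' = s ++ [a]

/-- `s'` is reachable from `s` with positive probability under `π`. -/
def Reach (e : V) (π : List V → V → ℝ) : List V → List V → Prop :=
  Relation.ReflTransGen (Step e π)

lemma Vval_le_Aval [Fintype V] (e : V) (r : List V → ℝ)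
    (π : List V → V → ℝ) (rb : ℝ) (hπ0 : ∀ s a, 0 ≤ π s a) :
    ∀ n s, Vval e r π n s ≤ Aval e r π rb n s := by
  intro n
  induction n with
  | zero => intro s; simp [Vval, Aval]
  | succ n ih =>
    intro s
    rw [Aval]
    split_ifs with h1 h2
    · rw [Vval]; simp [h1]
    · exact le_of_lt h2
    · rw [Vval]
      simp only [if_neg h1]
      apply Finset.sum_le_sum
      intro a _
      apply mul_le_mul_of_nonneg_left _ (hπ0 s a)
      split_ifs with ha
      · exact le_rfl
      · exact ih _

/-- Value dominance of dynamic value-thresholding (Lemma 4.1):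
at every reachable non-terminal state, the value of `a(π)` dominates
both the abstention reward and the value of `π`. -/
theorem value_dominance [Fintype V] (e : V) (r : List V → ℝ)
    (π : List V → V → ℝ) (rb : ℝ) (T : ℕ)
    (hπ0 : ∀ s a, 0 ≤ π s a) (hπ1 : ∀ s, ∑ a : V, π s a = 1)
    (hrb0 : 0 < rb) (hrb1 : rb ≤ 1)
    (s : List V) (hreach : Reach e π [] s) (hnt : e ∉ s) (hlen : s.length < T) :
    max rb (Vval e r π (T - s.length) s) ≤ Aval e r π rb (T - s.length) s := by
  obtain ⟨n, hn⟩ : ∃ n, T - s.length = n + 1 := ⟨T - s.length - 1, by omega⟩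
  rw [hn]
  by_cases h : Vval e r π (n + 1) s < rb
  · have hA : Aval e r π rb (n + 1) s = rb := by
      rw [Aval]; simp [hnt, h]
    rw [hA]
    exact max_le le_rfl (le_of_lt h)
  · exact max_le (le_trans (not_lt.mp h) (Vval_le_Aval e r π rb hπ0 _ s))
      (Vval_le_Aval e r π rb hπ0 _ s)
end

section
/- If the dynamic policy never abstains before position k (P(τ < k) = 0), then J(a(π)) ≥ J(f(π;k)). In particular, for k = 1 (input-only abstention), J(a(π)) ≥ J(f(π;1)) always holds. -/
open Finset

attribute [local instance] Classical.propDecidable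

variable {V : Type*}

/-- Value of the fixed-position abstention policy `f(π;k)`: it applies the
value-thresholding abstention rule only at timestep `k` (i.e. at prefixes of
length `k-1`) and follows `π` otherwise. -/
noncomputable def Fval [Fintype V] (e : V) (r : List V → ℝ)
    (π : List V → V → ℝ) (rb : ℝ) (k : ℕ) : ℕ → List V → ℝ
  | 0, _ => 0
  | n+1, s =>
      if e ∈ s then 0 else
      if s.length + 1 = k ∧ Vval e r π (n+1) s < rb then rb else
      ∑ a : V, π s a * (if a = e then r (s ++ [a]) else Fval e r π rb k n (s ++ [a]))

/-- Probability that `π`, started from state `s`, generates exactly the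
token sequence `p`. -/
noncomputable def prefProbAux (π : List V → V → ℝ) : List V → List V → ℝ
  | _, [] => 1
  | s, a :: p => π s a * prefProbAux π (s ++ [a]) p

lemma Fval_eq_Vval [Fintype V] (e : V) (r : List V → ℝ) (π : List V → V → ℝ)
    (rb : ℝ) (k : ℕ) : ∀ n s, k ≤ s.length → Fval e r π rb k n s = Vval e r π n s := by
  intro n
  induction n with
  | zero => intro s _; rfl
  | succ n ih =>
    intro s hs
    rw [Fval, Vval]
    by_cases he : e ∈ s
    · simp [he]
    · rw [if_neg he, if_neg he, if_neg (fun h => absurd h.1 (by omega))]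
      refine Finset.sum_congr rfl fun a _ => ?_
      by_cases ha : a = e
      · simp [ha]
      · rw [if_neg ha, if_neg ha, ih (s ++ [a]) (by simp; omega)]

lemma key_dom [Fintype V] (e : V) (r : List V → ℝ) (π : List V → V → ℝ)
    (rb : ℝ) (k T : ℕ)
    (hπ0 : ∀ s a, 0 ≤ π s a)
    (hno : ∀ s, Reach e π [] s → s.length + 1 < k → e ∉ s →
        rb ≤ Vval e r π (T - s.length) s) :
    ∀ n s, Reach e π [] s → s.length + n = T →
      Fval e r π rb k n s ≤ Aval e r π rb n s := by
  intro n
  induction n with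
  | zero => intro s _ _; rw [Fval, Aval]
  | succ n ih =>
    intro s hreach hlen
    rw [Fval, Aval]
    by_cases he : e ∈ s
    · simp [he]
    rw [if_neg he, if_neg he]
    by_cases hv : Vval e r π (n+1) s < rb
    · rw [if_pos hv]
      rcases lt_trichotomy (s.length + 1) k with hlt | heq | hgt
      · exfalso
        have h1 := hno s hreach hlt he
        have h2 : T - s.length = n + 1 := by omega
        rw [h2] at h1
        linarith
      · rw [if_pos ⟨heq, hv⟩]
      · rw [if_neg (by omega : ¬(s.length + 1 = k ∧ Vval e r π (n+1) s < rb))]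
        have heq : (∑ a : V, π s a * (if a = e then r (s ++ [a])
            else Fval e r π rb k n (s ++ [a]))) = Vval e r π (n+1) s := by
          rw [Vval, if_neg he]
          refine Finset.sum_congr rfl fun a _ => ?_
          by_cases ha : a = e
          · simp [ha]
          · rw [if_neg ha, if_neg ha, Fval_eq_Vval e r π rb k n (s ++ [a]) (by simp; omega)]
        rw [heq]
        linarith
    · rw [if_neg hv, if_neg (fun h => hv h.2)]
      refine Finset.sum_le_sum fun a _ => ?_
      by_cases hpa : 0 < π s a
      · refine mul_le_mul_of_nonneg_left ?_ hpa.le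
        by_cases ha : a = e
        · simp [ha]
        · rw [if_neg ha, if_neg ha]
          exact ih (s ++ [a]) (hreach.tail ⟨he, a, hpa, rfl⟩) (by simp; omega)
      · have h0 : π s a = 0 := le_antisymm (not_lt.1 hpa) (hπ0 s a)
        simp [h0]

/-- Corollary 4.5: if the dynamic policy never abstains before position `k`
(no reachable non-terminal state of length `< k-1` has value below `r⊥`),
then `J(a(π)) ≥ J(f(π;k))`; in particular, for `k = 1` (input-only
abstention) the inequality `J(a(π)) ≥ J(f(π;1))` always holds. -/
theorem dominance_no_early_abstention [Fintype V] {X : Type*} [Fintype X]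
    (e : V) (ρ : X → ℝ) (r : X → List V → ℝ)
    (π : X → List V → V → ℝ) (rb : ℝ) (T k : ℕ)
    (hρ0 : ∀ x, 0 ≤ ρ x) (hρ1 : ∑ x, ρ x = 1)
    (hπ0 : ∀ x s a, 0 ≤ π x s a) (hπ1 : ∀ x s, ∑ a : V, π x s a = 1)
    (hr : ∀ x y, r x y ∈ Set.Icc (0:ℝ) 1)
    (hrb0 : 0 < rb) (hrb1 : rb ≤ 1) (hk : 1 ≤ k) (hkT : k ≤ T)
    (hno : ∀ x, 0 < ρ x → ∀ s, Reach e (π x) [] s → s.length + 1 < k → e ∉ s →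
        rb ≤ Vval e (r x) (π x) (T - s.length) s) :
    (∑ x, ρ x * Fval e (r x) (π x) rb k T [])
        ≤ (∑ x, ρ x * Aval e (r x) (π x) rb T []) ∧
    (∑ x, ρ x * Fval e (r x) (π x) rb 1 T [])
        ≤ (∑ x, ρ x * Aval e (r x) (π x) rb T []) := by
  have main : ∀ (k' : ℕ), (∀ x, 0 < ρ x → ∀ s, Reach e (π x) [] s →
      s.length + 1 < k' → e ∉ s → rb ≤ Vval e (r x) (π x) (T - s.length) s) →
      (∑ x, ρ x * Fval e (r x) (π x) rb k' T [])
        ≤ (∑ x, ρ x * Aval e (r x) (π x) rb T []) := by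
    intro k' hno'
    refine Finset.sum_le_sum fun x _ => ?_
    rcases eq_or_lt_of_le (hρ0 x) with h0 | h0
    · simp [← h0]
    · refine mul_le_mul_of_nonneg_left ?_ (hρ0 x)
      exact key_dom e (r x) (π x) rb k' T (hπ0 x) (hno' x h0) T []
        Relation.ReflTransGen.refl (by simp)
  exact ⟨main k hno, main 1 (by intro x _ s _ h; omega)⟩
end

section
/- With β=0, if π* is an optimal non-abstaining policy, then the dynamic value-thresholding policy a(π*) is optimal among all policies over the augmented action space including the abstention token: J(a(π*)) = E_{x∼ρ}[max(r⊥, max_{y} r(x,y))] ≥ J(π†) for every abstention-enabled policy π†. -/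
open Finset

attribute [local instance] Classical.propDecidable

variable {V : Type*}

/-- Maximum terminal reward achievable from state `s` with `n` steps
remaining (over all completions extending `s`). -/
noncomputable def Mval [Fintype V] (e : V) (r : List V → ℝ) : ℕ → List V → ℝ
  | 0, _ => 0
  | n+1, s =>
      if e ∈ s then 0 else
      ⨆ a : V, (if a = e then r (s ++ [a]) else Mval e r n (s ++ [a]))

/-- Value of an abstention-enabled policy over the augmented action space
`V ∪ {⊥}` (the abstention action is `none`): abstaining terminates the
trajectory with reward `rb`. -/
noncomputable def Dval [Fintype V] (e : V) (r : List V → ℝ) (rb : ℝ)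
    (π : List V → Option V → ℝ) : ℕ → List V → ℝ
  | 0, _ => 0
  | n+1, s =>
      if e ∈ s then 0 else
      π s none * rb +
        ∑ a : V, π s (some a) *
          (if a = e then r (s ++ [a]) else Dval e r rb π n (s ++ [a]))

/-! `V(s; π*)` is squeezed between the value of the greedy policy, which attains the maximal
reward `M(s)`, and `M(s)` itself, so `π*` is optimal from the root. A convex combination attains
its upper bound only if every atom with positive weight does, so optimality propagates to every
state `π*` reaches. Along such states `a(π*)` abstains exactly where `M(s) < r⊥` and otherwise
follows `π*`, earning `max(r⊥, M(s))`; and no abstention-enabled policy can earn more, since at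
every state it mixes `r⊥` with continuations bounded by `M`. -/

section WeightedSums

variable {ι : Type*} [Fintype ι] {w f g : ι → ℝ}

theorem sum_mul_le_of_le_of_sum_eq_one (hw : ∀ i, 0 ≤ w i) (h1 : ∑ i, w i = 1) {M : ℝ}
    (hg : ∀ i, g i ≤ M) : ∑ i, w i * g i ≤ M :=
  calc ∑ i, w i * g i ≤ ∑ i, w i * M :=
        Finset.sum_le_sum fun i _ => mul_le_mul_of_nonneg_left (hg i) (hw i)
    _ = M := by rw [← Finset.sum_mul, h1, one_mul]

theorem eq_of_sum_mul_le_sum_mul (hw : ∀ i, 0 ≤ w i) (hfg : ∀ i, f i ≤ g i)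
    (h : ∑ i, w i * g i ≤ ∑ i, w i * f i) {i : ι} (hi : 0 < w i) : f i = g i := by
  have hle : ∀ j ∈ Finset.univ, w j * f j ≤ w j * g j :=
    fun j _ => mul_le_mul_of_nonneg_left (hfg j) (hw j)
  have hsum := le_antisymm (Finset.sum_le_sum hle) h
  exact mul_left_cancel₀ hi.ne' ((Finset.sum_eq_sum_iff_of_le hle).1 hsum i (Finset.mem_univ i))

theorem eq_of_sum_mul_eq_of_le (hw : ∀ i, 0 ≤ w i) (h1 : ∑ i, w i = 1) {M : ℝ}
    (hg : ∀ i, g i ≤ M) (h : ∑ i, w i * g i = M) {i : ι} (hi : 0 < w i) : g i = M :=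
  eq_of_sum_mul_le_sum_mul (g := fun _ => M) hw hg
    (by rw [← Finset.sum_mul, h1, one_mul, h]) hi

end WeightedSums

section Values

variable {e : V} {r : List V → ℝ} {π : List V → V → ℝ} {rb : ℝ} {n : ℕ} {s : List V}

noncomputable def qValue (e : V) (r : List V → ℝ) (f : List V → ℝ) (s : List V) (a : V) : ℝ :=
  if a = e then r (s ++ [a]) else f (s ++ [a])

theorem qValue_congr {f g : List V → ℝ} {a : V} (h : a ≠ e → f (s ++ [a]) = g (s ++ [a])) :
    qValue e r f s a = qValue e r g s a := by
  unfold qValue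
  split_ifs with ha
  · rfl
  · exact h ha

theorem qValue_of_ne {f : List V → ℝ} {a : V} (h : a ≠ e) : qValue e r f s a = f (s ++ [a]) :=
  if_neg h

theorem qValue_mono {f g : List V → ℝ} (h : ∀ t, f t ≤ g t) (a : V) :
    qValue e r f s a ≤ qValue e r g s a := by
  unfold qValue
  split_ifs
  · rfl
  · exact h _

variable [Fintype V]

theorem Vval_succ (hs : e ∉ s) :
    Vval e r π (n + 1) s = ∑ a, π s a * qValue e r (Vval e r π n) s a := by
  rw [Vval, if_neg hs]; rfl

theorem Mval_succ (hs : e ∉ s) : Mval e r (n + 1) s = ⨆ a, qValue e r (Mval e r n) s a := by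
  rw [Mval, if_neg hs]; rfl

theorem Aval_succ_of_le (hs : e ∉ s) (hV : rb ≤ Vval e r π (n + 1) s) :
    Aval e r π rb (n + 1) s = ∑ a, π s a * qValue e r (Aval e r π rb n) s a := by
  rw [Aval, if_neg hs, if_neg hV.not_gt]; rfl

theorem Dval_succ {πd : List V → Option V → ℝ} (hs : e ∉ s) :
    Dval e r rb πd (n + 1) s =
      ∑ o, πd s o * o.elim rb (qValue e r (Dval e r rb πd n) s) := by
  rw [Dval, if_neg hs, Fintype.sum_option]; rfl

theorem qValue_le_Mval_succ (hs : e ∉ s) (a : V) :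
    qValue e r (Mval e r n) s a ≤ Mval e r (n + 1) s := by
  rw [Mval_succ hs]
  exact le_ciSup (Set.finite_range _).bddAbove a

theorem Vval_le_Mval (hπ0 : ∀ s a, 0 ≤ π s a) (hπ1 : ∀ s, ∑ a, π s a = 1) :
    ∀ n s, Vval e r π n s ≤ Mval e r n s
  | 0, _ => le_rfl
  | n + 1, s => by
    by_cases hs : e ∈ s
    · simp [Vval, Mval, hs]
    rw [Vval_succ hs]
    refine sum_mul_le_of_le_of_sum_eq_one (hπ0 s) (hπ1 s) fun a => ?_
    exact (qValue_mono (Vval_le_Mval hπ0 hπ1 n) a).trans (qValue_le_Mval_succ hs a)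

theorem qValue_Vval_eq_Mval_succ (hπ0 : ∀ s a, 0 ≤ π s a) (hπ1 : ∀ s, ∑ a, π s a = 1)
    (hs : e ∉ s) (hV : Vval e r π (n + 1) s = Mval e r (n + 1) s) {a : V} (ha : 0 < π s a) :
    qValue e r (Vval e r π n) s a = Mval e r (n + 1) s := by
  refine eq_of_sum_mul_eq_of_le (hπ0 s) (hπ1 s) (fun b => ?_) ((Vval_succ hs).symm.trans hV) ha
  exact (qValue_mono (Vval_le_Mval hπ0 hπ1 n) b).trans (qValue_le_Mval_succ hs b)

theorem Aval_eq_Mval_of_Vval_eq (hπ0 : ∀ s a, 0 ≤ π s a) (hπ1 : ∀ s, ∑ a, π s a = 1) :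
    ∀ n s, Vval e r π n s = Mval e r n s → rb ≤ Mval e r n s →
      Aval e r π rb n s = Mval e r n s
  | 0, _, _, _ => rfl
  | n + 1, s, hV, hle => by
    by_cases hs : e ∈ s
    · simp [Aval, Mval, hs]
    rw [Aval_succ_of_le hs (hV ▸ hle)]
    have hterm : ∀ a, π s a * qValue e r (Aval e r π rb n) s a = π s a * Mval e r (n + 1) s := by
      intro a
      rcases (hπ0 s a).eq_or_lt with ha | ha
      · simp [← ha]
      have hQ := qValue_Vval_eq_Mval_succ hπ0 hπ1 hs hV ha
      refine congrArg _ ((qValue_congr fun hae => ?_).trans hQ)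
      rw [qValue_of_ne hae] at hQ
      have hM := qValue_le_Mval_succ (r := r) (n := n) hs a
      rw [qValue_of_ne hae] at hM
      have hchild : Vval e r π n (s ++ [a]) = Mval e r n (s ++ [a]) :=
        le_antisymm (Vval_le_Mval hπ0 hπ1 n _) (hM.trans hQ.ge)
      rw [hchild, Aval_eq_Mval_of_Vval_eq hπ0 hπ1 n _ hchild (hle.trans (hchild ▸ hQ).ge)]
    rw [Finset.sum_congr rfl fun a _ => hterm a, ← Finset.sum_mul, hπ1, one_mul]

theorem Aval_succ_eq_max_of_Vval_eq (hπ0 : ∀ s a, 0 ≤ π s a) (hπ1 : ∀ s, ∑ a, π s a = 1)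
    (hs : e ∉ s) (hV : Vval e r π (n + 1) s = Mval e r (n + 1) s) :
    Aval e r π rb (n + 1) s = max rb (Mval e r (n + 1) s) := by
  by_cases hlt : Vval e r π (n + 1) s < rb
  · rw [Aval, if_neg hs, if_pos hlt, max_eq_left (hV ▸ hlt).le]
  · rw [not_lt, hV] at hlt
    rw [Aval_eq_Mval_of_Vval_eq hπ0 hπ1 _ _ hV hlt, max_eq_right hlt]

theorem Dval_le_max_Mval {πd : List V → Option V → ℝ} (h0 : ∀ s o, 0 ≤ πd s o)
    (h1 : ∀ s, ∑ o, πd s o = 1) : ∀ n s, Dval e r rb πd n s ≤ max rb (Mval e r n s)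
  | 0, _ => le_max_right _ _
  | n + 1, s => by
    by_cases hs : e ∈ s
    · simp [Dval, Mval, hs]
    rw [Dval_succ hs]
    refine sum_mul_le_of_le_of_sum_eq_one (h0 s) (h1 s) fun o => ?_
    rcases o with _ | a
    · exact le_max_left _ _
    have hQ : qValue e r (Dval e r rb πd n) s a ≤ max rb (qValue e r (Mval e r n) s a) := by
      unfold qValue
      split_ifs
      · exact le_max_right _ _
      · exact Dval_le_max_Mval h0 h1 n _
    exact hQ.trans (max_le_max_left rb (qValue_le_Mval_succ hs a))

end Values

section Greedy

variable [Fintype V] [Nonempty V]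

/-- `T - s.length - 1` is the number of steps left after moving from `s` in an episode of
horizon `T` started at `[]`. -/
noncomputable def greedyAction (e : V) (r : List V → ℝ) (T : ℕ) (s : List V) : V :=
  Classical.choose (Finite.exists_max (qValue e r (Mval e r (T - s.length - 1)) s))

noncomputable def greedyPolicy (e : V) (r : List V → ℝ) (T : ℕ) : List V → V → ℝ :=
  fun s a => if a = greedyAction e r T s then 1 else 0

variable {e : V} {r : List V → ℝ} {T : ℕ}

theorem qValue_le_qValue_greedyAction (s : List V) (b : V) :
    qValue e r (Mval e r (T - s.length - 1)) s b ≤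
      qValue e r (Mval e r (T - s.length - 1)) s (greedyAction e r T s) :=
  Classical.choose_spec (Finite.exists_max _) b

theorem greedyPolicy_nonneg (s : List V) (a : V) : 0 ≤ greedyPolicy e r T s a := by
  unfold greedyPolicy; split_ifs <;> norm_num

theorem sum_greedyPolicy (s : List V) : ∑ a, greedyPolicy e r T s a = 1 := by
  simp [greedyPolicy]

theorem Vval_greedyPolicy :
    ∀ n s, n + s.length = T → Vval e r (greedyPolicy e r T) n s = Mval e r n s
  | 0, _, _ => rfl
  | n + 1, s, hlen => by
    by_cases hs : e ∈ s
    · simp [Vval, Mval, hs]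
    have hn : T - s.length - 1 = n := by omega
    have hmax := qValue_le_qValue_greedyAction (e := e) (r := r) (T := T) s
    rw [hn] at hmax
    rw [Vval_succ hs, Mval_succ hs, Finset.sum_eq_single (greedyAction e r T s)]
    · rw [greedyPolicy, if_pos rfl, one_mul,
        le_antisymm (ciSup_le hmax) (le_ciSup (Set.finite_range _).bddAbove _)]
      refine qValue_congr fun _ => Vval_greedyPolicy n _ ?_
      simp only [List.length_append, List.length_singleton]; omega
    · intro b _ hb; rw [greedyPolicy, if_neg hb, zero_mul]
    · simp

end Greedy

theorem Vval_eq_Mval_of_optimal [Fintype V] {X : Type*} [Fintype X] {e : V} {ρ : X → ℝ}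
    {r : X → List V → ℝ} {πstar : X → List V → V → ℝ} {T : ℕ} (hρ0 : ∀ x, 0 ≤ ρ x)
    (hπ0 : ∀ x s a, 0 ≤ πstar x s a) (hπ1 : ∀ x s, ∑ a : V, πstar x s a = 1)
    (hopt : ∀ π' : X → List V → V → ℝ,
        (∀ x s a, 0 ≤ π' x s a) → (∀ x s, ∑ a : V, π' x s a = 1) →
        (∑ x, ρ x * Vval e (r x) (π' x) T []) ≤
          ∑ x, ρ x * Vval e (r x) (πstar x) T [])
    {x : X} (hx : 0 < ρ x) : Vval e (r x) (πstar x) T [] = Mval e (r x) T [] := by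
  have : Nonempty V := ⟨e⟩
  have hgreedy := hopt (fun x => greedyPolicy e (r x) T)
    (fun _ => greedyPolicy_nonneg) (fun _ => sum_greedyPolicy)
  simp only [Vval_greedyPolicy T [] (add_zero T)] at hgreedy
  exact eq_of_sum_mul_le_sum_mul hρ0 (fun x => Vval_le_Mval (hπ0 x) (hπ1 x) T []) hgreedy hx

theorem optimality_of_dynamic_abstention_general [Fintype V] {X : Type*} [Fintype X]
    (e : V) (ρ : X → ℝ) (r : X → List V → ℝ)
    (πstar : X → List V → V → ℝ) (rb : ℝ) (T : ℕ)
    (hρ0 : ∀ x, 0 ≤ ρ x)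
    (hπ0 : ∀ x s a, 0 ≤ πstar x s a) (hπ1 : ∀ x s, ∑ a : V, πstar x s a = 1)
    (hT : 1 ≤ T)
    (hopt : ∀ π' : X → List V → V → ℝ,
        (∀ x s a, 0 ≤ π' x s a) → (∀ x s, ∑ a : V, π' x s a = 1) →
        (∑ x, ρ x * Vval e (r x) (π' x) T []) ≤
          ∑ x, ρ x * Vval e (r x) (πstar x) T []) :
    (∑ x, ρ x * Aval e (r x) (πstar x) rb T [])
        = (∑ x, ρ x * max rb (Mval e (r x) T [])) ∧
    ∀ πd : X → List V → Option V → ℝ,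
      (∀ x s o, 0 ≤ πd x s o) → (∀ x s, ∑ o : Option V, πd x s o = 1) →
      (∑ x, ρ x * Dval e (r x) rb (πd x) T []) ≤
        ∑ x, ρ x * Aval e (r x) (πstar x) rb T [] := by
  obtain ⟨n, rfl⟩ : ∃ n, T = n + 1 := ⟨T - 1, by omega⟩
  have hJ : ∑ x, ρ x * Aval e (r x) (πstar x) rb (n + 1) [] =
      ∑ x, ρ x * max rb (Mval e (r x) (n + 1) []) := by
    refine Finset.sum_congr rfl fun x _ => ?_
    rcases (hρ0 x).eq_or_lt with hx | hx
    · simp [← hx]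
    rw [Aval_succ_eq_max_of_Vval_eq (hπ0 x) (hπ1 x) List.not_mem_nil
      (Vval_eq_Mval_of_optimal hρ0 hπ0 hπ1 hopt hx)]
  refine ⟨hJ, fun πd hd0 hd1 => hJ ▸ Finset.sum_le_sum fun x _ => ?_⟩
  exact mul_le_mul_of_nonneg_left (Dval_le_max_Mval (hd0 x) (hd1 x) _ _) (hρ0 x)

/-- Optimality of dynamic abstention (Proposition 4.7): with `β = 0`, if
`π*` is optimal among non-abstaining policies, then `a(π*)` achieves
`J(a(π*)) = E_{x∼ρ}[max(r⊥, max_y r(x,y))]` and dominates every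
abstention-enabled policy. -/
theorem optimality_of_dynamic_abstention [Fintype V] {X : Type*} [Fintype X]
    (e : V) (ρ : X → ℝ) (r : X → List V → ℝ)
    (πstar : X → List V → V → ℝ) (rb : ℝ) (T : ℕ)
    (hρ0 : ∀ x, 0 ≤ ρ x) (hρ1 : ∑ x, ρ x = 1)
    (hπ0 : ∀ x s a, 0 ≤ πstar x s a) (hπ1 : ∀ x s, ∑ a : V, πstar x s a = 1)
    (hr : ∀ x y, r x y ∈ Set.Icc (0:ℝ) 1)
    (hrb0 : 0 < rb) (hrb1 : rb ≤ 1) (hT : 1 ≤ T)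
    (hopt : ∀ π' : X → List V → V → ℝ,
        (∀ x s a, 0 ≤ π' x s a) → (∀ x s, ∑ a : V, π' x s a = 1) →
        (∑ x, ρ x * Vval e (r x) (π' x) T []) ≤
          ∑ x, ρ x * Vval e (r x) (πstar x) T []) :
    (∑ x, ρ x * Aval e (r x) (πstar x) rb T [])
        = (∑ x, ρ x * max rb (Mval e (r x) T [])) ∧
    ∀ πd : X → List V → Option V → ℝ,
      (∀ x s o, 0 ≤ πd x s o) → (∀ x s, ∑ o : Option V, πd x s o = 1) →
      (∑ x, ρ x * Dval e (r x) rb (πd x) T []) ≤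
        ∑ x, ρ x * Aval e (r x) (πstar x) rb T [] :=
  optimality_of_dynamic_abstention_general e ρ r πstar rb T hρ0 hπ0 hπ1 hT hopt
end

section
/- Suppose β=0, rewards are binary r(x,y) ∈ {0,1}, and the value function of π is L-Lipschitz along trajectories: |V(x,y_{1:t-1};π) − V(x,y_{1:t};π)| ≤ L for all reachable states. Let α be the total abstention rate of a(π) and α₁ = P(V(x, empty; π) < r⊥) the immediate-abstention probability. Then J(a(π)) − J(π) ≤ α₁·r⊥ + (α − α₁)·L. -/
open Finset

attribute [local instance] Classical.propDecidable

variable {V : Type*}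

/-- Probability that the dynamic value-thresholding policy `a(π)` abstains
on a trajectory started from state `s` with `n` steps remaining. -/
noncomputable def Aprob [Fintype V] (e : V) (r : List V → ℝ)
    (π : List V → V → ℝ) (rb : ℝ) : ℕ → List V → ℝ
  | 0, _ => 0
  | n+1, s =>
      if e ∈ s then 0 else
      if Vval e r π (n+1) s < rb then 1 else
      ∑ a : V, π s a * (if a = e then 0 else Aprob e r π rb n (s ++ [a]))

def ValueLipschitzAlong [Fintype V] (e : V) (r : List V → ℝ) (π : List V → V → ℝ) (L : ℝ)
    (T : ℕ) : Prop :=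
  ∀ s, Reach e π [] s → e ∉ s → s.length < T → ∀ a : V, 0 < π s a →
    |Vval e r π (T - s.length) s - Vval e r π (T - (s.length + 1)) (s ++ [a])| ≤ L

section
variable [Fintype V] {e : V} {r : List V → ℝ} {π : List V → V → ℝ} {rb L : ℝ}

lemma Vval_nonneg (hπ : ∀ s a, 0 ≤ π s a) (hr : ∀ y, 0 ≤ r y) :
    ∀ n s, 0 ≤ Vval e r π n s
  | 0, _ => le_rfl
  | n + 1, s => by
    rw [Vval]
    split_ifs
    · exact le_rfl
    · refine Finset.sum_nonneg fun a _ => mul_nonneg (hπ s a) ?_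
      split_ifs
      exacts [hr _, Vval_nonneg hπ hr n _]

lemma Aval_of_lt {n : ℕ} {s : List V} (hs : e ∉ s) (h : Vval e r π (n + 1) s < rb) :
    Aval e r π rb (n + 1) s = rb := by
  rw [Aval, if_neg hs, if_pos h]

lemma Aprob_of_lt {n : ℕ} {s : List V} (hs : e ∉ s) (h : Vval e r π (n + 1) s < rb) :
    Aprob e r π rb (n + 1) s = 1 := by
  rw [Aprob, if_neg hs, if_pos h]

lemma Aval_sub_Vval_le_of_lt {n : ℕ} {s : List V} (h : Vval e r π n s < rb)
    (hL : rb - Vval e r π n s ≤ L) :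
    Aval e r π rb n s - Vval e r π n s ≤ Aprob e r π rb n s * L := by
  rcases n with _ | n
  · simp [Aval, Vval, Aprob]
  by_cases hs : e ∈ s
  · simp [Aval, Vval, Aprob, hs]
  rwa [Aval_of_lt hs h, Aprob_of_lt hs h, one_mul]

/-- Where `a(π)` does not abstain, every later abstention happens one step below a state of
value at least `r⊥`, so by the Lipschitz bound each one gains at most `L`. -/
lemma Aval_sub_Vval_le_Aprob_mul {T : ℕ} (hπ : ∀ s a, 0 ≤ π s a)
    (hlip : ValueLipschitzAlong e r π L T) :
    ∀ n s, Reach e π [] s → s.length + n = T → ¬ Vval e r π n s < rb →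
      Aval e r π rb n s - Vval e r π n s ≤ Aprob e r π rb n s * L
  | 0, _, _, _, _ => by simp [Aval, Vval, Aprob]
  | m + 1, s, hreach, hlen, hstay => by
    by_cases hs : e ∈ s
    · simp [Aval, Vval, Aprob, hs]
    have hchild : ∀ a, 0 < π s a → a ≠ e →
        Aval e r π rb m (s ++ [a]) - Vval e r π m (s ++ [a])
          ≤ Aprob e r π rb m (s ++ [a]) * L := by
      intro a ha hae
      by_cases habst : Vval e r π m (s ++ [a]) < rb
      · refine Aval_sub_Vval_le_of_lt habst ?_
        have hstep := hlip s hreach hs (by omega) a ha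
        rw [show T - s.length = m + 1 by omega, show T - (s.length + 1) = m by omega] at hstep
        linarith [(abs_le.mp hstep).2, not_lt.mp hstay]
      · exact Aval_sub_Vval_le_Aprob_mul hπ hlip m (s ++ [a])
          (hreach.tail ⟨hs, a, ha, rfl⟩) (by simp; omega) habst
    rw [Aval, Aprob, if_neg hs, if_neg hs, if_neg hstay, if_neg hstay, Vval, if_neg hs,
      ← Finset.sum_sub_distrib, Finset.sum_mul]
    refine Finset.sum_le_sum fun a _ => ?_
    rw [← mul_sub, mul_assoc]
    rcases (hπ s a).eq_or_lt with ha | ha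
    · simp [← ha]
    refine mul_le_mul_of_nonneg_left ?_ (hπ s a)
    by_cases hae : a = e
    · simp [hae]
    simpa only [if_neg hae] using hchild a ha hae

lemma Aval_sub_Vval_nil_le {T : ℕ} (hT : 1 ≤ T) (hπ : ∀ s a, 0 ≤ π s a) (hr : ∀ y, 0 ≤ r y)
    (hlip : ValueLipschitzAlong e r π L T) :
    Aval e r π rb T [] - Vval e r π T []
      ≤ (if Vval e r π T [] < rb then 1 else 0) * rb
        + (Aprob e r π rb T [] - if Vval e r π T [] < rb then 1 else 0) * L := by
  obtain ⟨n, rfl⟩ : ∃ n, T = n + 1 := ⟨T - 1, by omega⟩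
  split_ifs with habst
  · rw [Aval_of_lt List.not_mem_nil habst, Aprob_of_lt List.not_mem_nil habst]
    linarith [Vval_nonneg (e := e) hπ hr (n + 1) []]
  · simpa using Aval_sub_Vval_le_Aprob_mul hπ hlip (n + 1) [] .refl (by simp) habst

end

theorem linear_improvement_bound_general [Fintype V] {X : Type*} [Fintype X]
    (e : V) (ρ : X → ℝ) (r : X → List V → ℝ)
    (π : X → List V → V → ℝ) (rb L : ℝ) (T : ℕ)
    (hρ0 : ∀ x, 0 ≤ ρ x)
    (hπ0 : ∀ x s a, 0 ≤ π x s a)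
    (hbin : ∀ x y, r x y = 0 ∨ r x y = 1)
    (hT : 1 ≤ T)
    (hlip : ∀ x, 0 < ρ x → ∀ s, Reach e (π x) [] s → e ∉ s → s.length < T →
        ∀ a : V, 0 < π x s a →
          |Vval e (r x) (π x) (T - s.length) s -
            Vval e (r x) (π x) (T - (s.length + 1)) (s ++ [a])| ≤ L) :
    (∑ x, ρ x * Aval e (r x) (π x) rb T []) - (∑ x, ρ x * Vval e (r x) (π x) T [])
      ≤ (∑ x, ρ x * (if Vval e (r x) (π x) T [] < rb then (1:ℝ) else 0)) * rb
        + ((∑ x, ρ x * Aprob e (r x) (π x) rb T [])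
            - ∑ x, ρ x * (if Vval e (r x) (π x) T [] < rb then (1:ℝ) else 0)) * L := by
  rw [Finset.sum_mul, ← Finset.sum_sub_distrib, ← Finset.sum_sub_distrib, Finset.sum_mul,
    ← Finset.sum_add_distrib]
  refine Finset.sum_le_sum fun x _ => ?_
  rcases (hρ0 x).eq_or_lt with hx | hx
  · simp [← hx]
  have hr : ∀ y, 0 ≤ r x y := fun y => by rcases hbin x y with h | h <;> simp [h]
  have hgain := Aval_sub_Vval_nil_le (rb := rb) hT (hπ0 x) hr (hlip x hx)
  linarith [mul_le_mul_of_nonneg_left hgain (hρ0 x)]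

/-- Linear improvement bound (Proposition 4.10): with `β = 0`, binary
rewards, and an `L`-Lipschitz value function along reachable trajectories,
`J(a(π)) − J(π) ≤ α₁·r⊥ + (α − α₁)·L`, where `α` is the abstention rate of
`a(π)` and `α₁` the probability of immediate abstention. -/
theorem linear_improvement_bound [Fintype V] {X : Type*} [Fintype X]
    (e : V) (ρ : X → ℝ) (r : X → List V → ℝ)
    (π : X → List V → V → ℝ) (rb L : ℝ) (T : ℕ)
    (hρ0 : ∀ x, 0 ≤ ρ x) (hρ1 : ∑ x, ρ x = 1)
    (hπ0 : ∀ x s a, 0 ≤ π x s a) (hπ1 : ∀ x s, ∑ a : V, π x s a = 1)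
    (hbin : ∀ x y, r x y = 0 ∨ r x y = 1)
    (hrb0 : 0 < rb) (hrb1 : rb ≤ 1) (hT : 1 ≤ T)
    (hlip : ∀ x, 0 < ρ x → ∀ s, Reach e (π x) [] s → e ∉ s → s.length < T →
        ∀ a : V, 0 < π x s a →
          |Vval e (r x) (π x) (T - s.length) s -
            Vval e (r x) (π x) (T - (s.length + 1)) (s ++ [a])| ≤ L) :
    (∑ x, ρ x * Aval e (r x) (π x) rb T []) - (∑ x, ρ x * Vval e (r x) (π x) T [])
      ≤ (∑ x, ρ x * (if Vval e (r x) (π x) T [] < rb then (1:ℝ) else 0)) * rb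
        + ((∑ x, ρ x * Aprob e (r x) (π x) rb T [])
            - ∑ x, ρ x * (if Vval e (r x) (π x) T [] < rb then (1:ℝ) else 0)) * L :=
  linear_improvement_bound_general e ρ r π rb L T hρ0 hπ0 hbin hT hlip
end

section
/- With stopping time τ as above, J(a(π)) − J(π) = E[(r⊥ − V(x,y_{1:τ-1};π))·𝟙{τ ≤ c}]: the improvement of dynamic abstention over the base policy equals the expected gap between the fallback reward and the value at abstention time, on the event of abstention. -/
open Finset

attribute [local instance] Classical.propDecidable

variable {V : Type*}

/-- First abstention time of the dynamic policy along the trajectory `y`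
(with horizon `T`): `τ = min{t ≥ 1 : V(y_{1:t-1};π) < r⊥}`, with the
sentinel value `T + 2` (playing the role of `∞`) if no such `t` exists. -/
noncomputable def TauOf [Fintype V] (e : V) (r : List V → ℝ)
    (π : List V → V → ℝ) (rb : ℝ) (T : ℕ) (y : List V) : ℕ :=
  if h : ∃ m, m < T ∧ Vval e r π (T - m) (y.take m) < rb then Nat.find h + 1
  else T + 2

/-- Completion (eos) time of the trajectory `y`: the (1-indexed) position of
the first occurrence of `e`, or `T + 1` if `y` contains no `e`. -/
noncomputable def CtOf (e : V) (T : ℕ) (y : List V) : ℕ :=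
  if e ∈ y then y.idxOf e + 1 else T + 1

/-!
Write `G = Aval - Vval` for the gain of abstention. Where the rule fires, `G = r⊥ - V`; elsewhere
both policies take the same step, so `G` is the `π`-average of `G` at the successor states, and
emitting `e` contributes nothing. Unrolling this recursion along the trajectory (the
continuations of an abstention state carry total probability one) turns `G` at the root into the
expectation of `r⊥ - V` at the first abstention time, on the event that abstention comes before
completion.
-/

lemma Fintype.sum_ofFn_succ {α M : Type*} [Fintype α] [AddCommMonoid M] {n : ℕ}
    (g : List α → M) :
    ∑ w : Fin (n + 1) → α, g (List.ofFn w) =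
      ∑ a, ∑ w : Fin n → α, g (a :: List.ofFn w) := by
  rw [← (Fin.consEquiv fun _ => α).sum_comp, Fintype.sum_prod_type]
  simp [Fin.consEquiv, List.ofFn_succ]

lemma ctOf_le {e : V} {T : ℕ} {y : List V} (hy : y.length ≤ T) : CtOf e T y ≤ T + 1 := by
  rw [CtOf]
  split_ifs with he
  · have := List.idxOf_lt_length_iff.2 he
    omega
  · rfl

lemma ctOf_append_cons_self {e : V} {T : ℕ} {s : List V} (hs : e ∉ s) (l : List V) :
    CtOf e T (s ++ e :: l) = s.length + 1 := by
  rw [CtOf, if_pos (by simp), List.idxOf_append_of_notMem hs, List.idxOf_cons_self]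

lemma length_lt_ctOf_append {e : V} {T : ℕ} {s : List V} (hs : e ∉ s) (hsT : s.length ≤ T)
    (u : List V) :
    s.length < CtOf e T (s ++ u) := by
  rw [CtOf]
  split_ifs
  · rw [List.idxOf_append_of_notMem hs]
    omega
  · omega

section Trajectories

variable [Fintype V] (e : V) (r : List V → ℝ) (π : List V → V → ℝ) (rb : ℝ) (T : ℕ)

lemma sum_prefProbAux_mul_succ (s : List V) (n : ℕ) (f : List V → ℝ) :
    ∑ w : Fin (n + 1) → V, prefProbAux π s (List.ofFn w) * f (List.ofFn w) =
      ∑ a, π s a *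
        ∑ w : Fin n → V, prefProbAux π (s ++ [a]) (List.ofFn w) * f (a :: List.ofFn w) := by
  rw [Fintype.sum_ofFn_succ fun l => prefProbAux π s l * f l]
  simp only [prefProbAux, Finset.mul_sum, mul_assoc]

lemma sum_prefProbAux (hπ1 : ∀ s, ∑ a, π s a = 1) (n : ℕ) (s : List V) :
    ∑ w : Fin n → V, prefProbAux π s (List.ofFn w) = 1 := by
  induction n generalizing s with
  | zero => simp [prefProbAux]
  | succ n ih =>
    simpa [ih, hπ1] using sum_prefProbAux_mul_succ π s n fun _ => 1

lemma aval_sub_vval_succ {s : List V} (hs : e ∉ s) (n : ℕ) :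
    Aval e r π rb (n + 1) s - Vval e r π (n + 1) s =
      if Vval e r π (n + 1) s < rb then rb - Vval e r π (n + 1) s
      else ∑ a, π s a *
        (if a = e then 0 else Aval e r π rb n (s ++ [a]) - Vval e r π n (s ++ [a])) := by
  rw [Aval, Vval, if_neg hs, if_neg hs]
  split_ifs
  · rfl
  · rw [← Finset.sum_sub_distrib]
    refine Finset.sum_congr rfl fun a _ => ?_
    split_ifs <;> ring

/-- The predicate whose first witness defines `TauOf`: the rule fires at the prefix of
length `m`. -/
def AbstainsAt (y : List V) (m : ℕ) : Prop :=
  m < T ∧ Vval e r π (T - m) (y.take m) < rb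

variable {e r π rb T}

lemma abstainsAt_append_iff {s : List V} (u : List V) {m : ℕ} (hm : m ≤ s.length) :
    AbstainsAt e r π rb T (s ++ u) m ↔ AbstainsAt e r π rb T s m := by
  rw [AbstainsAt, AbstainsAt, List.take_append_of_le_length hm]

lemma abstainsAt_length_iff {s : List V} (hsT : s.length < T) :
    AbstainsAt e r π rb T s s.length ↔ Vval e r π (T - s.length) s < rb := by
  simp [AbstainsAt, hsT]

lemma tauOf_eq_succ {y : List V} {k : ℕ} (hk : AbstainsAt e r π rb T y k)
    (hbefore : ∀ m < k, ¬ AbstainsAt e r π rb T y m) : TauOf e r π rb T y = k + 1 := by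
  have hex : ∃ m, m < T ∧ Vval e r π (T - m) (y.take m) < rb := ⟨k, hk⟩
  rw [TauOf, dif_pos hex, Nat.add_right_cancel_iff, Nat.find_eq_iff]
  exact ⟨hk, hbefore⟩

lemma lt_tauOf {y : List V} {k : ℕ} (hkT : k ≤ T + 1)
    (hbefore : ∀ m < k, ¬ AbstainsAt e r π rb T y m) : k < TauOf e r π rb T y := by
  rw [TauOf]
  split_ifs with hex
  · have : k ≤ Nat.find hex := (Nat.le_find_iff hex k).2 hbefore
    omega
  · omega

variable (e r π rb T)

/-- The paper's `(r⊥ - V(y_{1:τ-1}; π)) · 𝟙{τ ≤ c}`. -/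
noncomputable def abstentionGap (y : List V) : ℝ :=
  (rb - Vval e r π (T - (TauOf e r π rb T y - 1)) (y.take (TauOf e r π rb T y - 1))) *
    (if TauOf e r π rb T y ≤ CtOf e T y then (1 : ℝ) else 0)

variable {e r π rb T}

lemma abstentionGap_eq_zero {y : List V} (h : CtOf e T y < TauOf e r π rb T y) :
    abstentionGap e r π rb T y = 0 := by
  rw [abstentionGap, if_neg (by omega), mul_zero]

lemma abstentionGap_append_of_abstainsAt {s : List V} (hs : e ∉ s)
    (hbefore : ∀ m < s.length, ¬ AbstainsAt e r π rb T s m)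
    (habs : AbstainsAt e r π rb T s s.length) (u : List V) :
    abstentionGap e r π rb T (s ++ u) = rb - Vval e r π (T - s.length) s := by
  have hτ : TauOf e r π rb T (s ++ u) = s.length + 1 :=
    tauOf_eq_succ ((abstainsAt_append_iff u le_rfl).2 habs)
      fun m hm => (abstainsAt_append_iff u hm.le).not.2 (hbefore m hm)
  have hc := length_lt_ctOf_append hs habs.1.le u
  rw [abstentionGap, hτ, Nat.add_sub_cancel, List.take_left, if_pos (by omega), mul_one]

lemma abstentionGap_append_cons_self {s : List V} (hs : e ∉ s) (hsT : s.length < T)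
    (hbefore : ∀ m ≤ s.length, ¬ AbstainsAt e r π rb T s m) (l : List V) :
    abstentionGap e r π rb T (s ++ e :: l) = 0 := by
  refine abstentionGap_eq_zero ?_
  rw [ctOf_append_cons_self hs]
  exact lt_tauOf (by omega) fun m hm =>
    (abstainsAt_append_iff _ (Nat.lt_succ_iff.1 hm)).not.2 (hbefore m (Nat.lt_succ_iff.1 hm))

theorem aval_sub_vval_eq_sum_abstentionGap (hπ1 : ∀ s, ∑ a, π s a = 1) (n : ℕ) (s : List V)
    (hlen : s.length + n = T) (hs : e ∉ s)
    (hbefore : ∀ m < s.length, ¬ AbstainsAt e r π rb T s m) :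
    Aval e r π rb n s - Vval e r π n s =
      ∑ w : Fin n → V,
        prefProbAux π s (List.ofFn w) * abstentionGap e r π rb T (s ++ List.ofFn w) := by
  induction n generalizing s with
  | zero =>
    have hτ : T + 1 < TauOf e r π rb T s :=
      lt_tauOf le_rfl fun m hm => if hmT : m < T then hbefore m (by omega) else fun h => hmT h.1
    have hc : CtOf e T s ≤ T + 1 := ctOf_le (by omega)
    simp [Aval, Vval, prefProbAux, abstentionGap_eq_zero (hc.trans_lt hτ)]
  | succ n ih =>
    have hrem : T - s.length = n + 1 := by omega
    rw [aval_sub_vval_succ e r π rb hs]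
    split_ifs with hlt
    · have habs : AbstainsAt e r π rb T s s.length := by
        rwa [abstainsAt_length_iff (by omega), hrem]
      simp only [abstentionGap_append_of_abstainsAt hs hbefore habs, hrem, ← Finset.sum_mul,
        sum_prefProbAux π hπ1, one_mul]
    · have hnow : ¬ AbstainsAt e r π rb T s s.length := by
        rwa [abstainsAt_length_iff (by omega), hrem]
      have hbefore' : ∀ m ≤ s.length, ¬ AbstainsAt e r π rb T s m := fun m hm =>
        (Nat.lt_or_eq_of_le hm).elim (hbefore m) (· ▸ hnow)
      rw [sum_prefProbAux_mul_succ π s n fun l => abstentionGap e r π rb T (s ++ l)]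
      refine Finset.sum_congr rfl fun a _ => congrArg (π s a * ·) ?_
      split_ifs with ha
      · subst ha
        simp [abstentionGap_append_cons_self hs (by omega) hbefore']
      · have hs' : e ∉ s ++ [a] := by simp [hs, Ne.symm ha]
        have hbefore'' : ∀ m < (s ++ [a]).length, ¬ AbstainsAt e r π rb T (s ++ [a]) m :=
          fun m hm => (abstainsAt_append_iff _ (by simpa using hm)).not.2
            (hbefore' m (by simpa using hm))
        rw [ih (s ++ [a]) (by simp; omega) hs' hbefore'']
        simp

end Trajectories

theorem improvement_identity_general [Fintype V] {X : Type*} [Fintype X]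
    (e : V) (ρ : X → ℝ) (r : X → List V → ℝ)
    (π : X → List V → V → ℝ) (rb : ℝ) (T : ℕ)
    (hπ1 : ∀ x s, ∑ a : V, π x s a = 1) :
    (∑ x, ρ x * Aval e (r x) (π x) rb T []) - (∑ x, ρ x * Vval e (r x) (π x) T [])
      = ∑ x, ρ x * ∑ w : Fin T → V,
          prefProbAux (π x) [] (List.ofFn w) *
            ((rb - Vval e (r x) (π x)
                (T - (TauOf e (r x) (π x) rb T (List.ofFn w) - 1))
                ((List.ofFn w).take (TauOf e (r x) (π x) rb T (List.ofFn w) - 1))) *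
             (if TauOf e (r x) (π x) rb T (List.ofFn w) ≤ CtOf e T (List.ofFn w)
              then (1:ℝ) else 0)) := by
  rw [← Finset.sum_sub_distrib]
  refine Finset.sum_congr rfl fun x _ => ?_
  rw [← mul_sub,
    aval_sub_vval_eq_sum_abstentionGap (T := T) (hπ1 x) T [] (by simp) (by simp) (by simp)]
  rfl

/-- Exact improvement identity: `J(a(π)) − J(π) =
E[(r⊥ − V(x,y_{1:τ-1};π))·𝟙{τ ≤ c}]` — the improvement of dynamic
abstention over the base policy equals the expected gap between the
fallback reward and the value at abstention time, on the event of
abstention. -/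
theorem improvement_identity [Fintype V] {X : Type*} [Fintype X]
    (e : V) (ρ : X → ℝ) (r : X → List V → ℝ)
    (π : X → List V → V → ℝ) (rb : ℝ) (T : ℕ)
    (hρ0 : ∀ x, 0 ≤ ρ x) (hρ1 : ∑ x, ρ x = 1)
    (hπ0 : ∀ x s a, 0 ≤ π x s a) (hπ1 : ∀ x s, ∑ a : V, π x s a = 1)
    (hbin : ∀ x y, r x y = 0 ∨ r x y = 1)
    (hrb0 : 0 < rb) (hrb1 : rb ≤ 1) (hT : 1 ≤ T) :
    (∑ x, ρ x * Aval e (r x) (π x) rb T []) - (∑ x, ρ x * Vval e (r x) (π x) T [])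
      = ∑ x, ρ x * ∑ w : Fin T → V,
          prefProbAux (π x) [] (List.ofFn w) *
            ((rb - Vval e (r x) (π x)
                (T - (TauOf e (r x) (π x) rb T (List.ofFn w) - 1))
                ((List.ofFn w).take (TauOf e (r x) (π x) rb T (List.ofFn w) - 1))) *
             (if TauOf e (r x) (π x) rb T (List.ofFn w) ≤ CtOf e T (List.ofFn w)
              then (1:ℝ) else 0)) :=
  improvement_identity_general e ρ r π rb T hπ1
end
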